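/- arXiv:2410.07248 — 4 statements merged into one kernel-verified Lean document; each statement's English description precedes it below -/
import Mathlib

section
/- Let α, β ∈ S_n be permutations such that the subgroup generated by α and β acts transitively on [n], and let γ = αβ. Then κ(α) + κ(β) + κ(γ) − n is an even integer that is at most 2, where κ(π) denotes the number of cycles of π. Equivalently, there is a nonnegative integer g with κ(α) + κ(β) − n + κ(γ) = 2 − 2g. -/
open Equiv Finset

noncomputable section
open scoped Classical

/-- The cycle type of a permutation of `Fin n`, including fixed points (parts equal to 1). -/
def fullCycleType {n : ℕ} (σ : Equiv.Perm (Fin n)) : Multiset ℕ :=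
  σ.cycleType + Multiset.replicate (n - σ.cycleType.sum) 1

/-- `κ(σ)`: the number of cycles of a permutation, fixed points counting as cycles. -/
def kappa {n : ℕ} (σ : Equiv.Perm (Fin n)) : ℕ := (fullCycleType σ).card

/-- The parts of a partition sorted in weakly decreasing order. -/
def sortedParts {n : ℕ} (lam : Nat.Partition n) : List ℕ := (lam.parts.sort (· ≤ ·)).reverse

/-- `λ_i`, the `i`-th part (0-indexed) of a partition, `0` if `i` is too large. -/
def partFn {n : ℕ} (lam : Nat.Partition n) (i : ℕ) : ℕ := (sortedParts lam).getD i 0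

/-- The `j`-th part of the conjugate partition. -/
def conjFn {n : ℕ} (lam : Nat.Partition n) (j : ℕ) : ℕ :=
  ((Finset.range n).filter fun i => j < partFn lam i).card

/-- The cells `(i, j)` (row, column; 0-indexed) of the Young diagram of a partition of `n`. -/
def cells {n : ℕ} (lam : Nat.Partition n) : Finset (ℕ × ℕ) :=
  (Finset.range n ×ˢ Finset.range n).filter fun c => c.2 < partFn lam c.1

/-- The hook length `h(u)` of a cell `u = (i, j)` of a partition. -/
def hookLen {n : ℕ} (lam : Nat.Partition n) (c : ℕ × ℕ) : ℕ :=
  partFn lam c.1 - c.2 + (conjFn lam c.2 - c.1) - 1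

/-- The content `c(u) = j - i` of a cell `u = (i, j)`. -/
def content (c : ℕ × ℕ) : ℚ := (c.2 : ℚ) - (c.1 : ℚ)

/-- `f^λ`, the dimension of the irreducible representation of `S_n` indexed by `λ`,
given by the hook length formula. -/
def fdim {n : ℕ} (lam : Nat.Partition n) : ℚ :=
  (n.factorial : ℚ) / ∏ c ∈ cells lam, (hookLen lam c : ℚ)

/-- `𝔪_{λ,m} = ∏_{u∈λ} (m + c(u))/h(u)`. -/
def mfrak {n : ℕ} (lam : Nat.Partition n) (m : ℕ) : ℚ :=
  ∏ c ∈ cells lam, (((m : ℚ) + content c) / (hookLen lam c : ℚ))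

/-- `𝔠_{λ,m} = ∑_{d=0}^m (−1)^d C(m,d) 𝔪_{λ,m−d}`. -/
def cfrak {n : ℕ} (lam : Nat.Partition n) (m : ℕ) : ℚ :=
  ∑ d ∈ Finset.range (m + 1), (-1 : ℚ) ^ d * (m.choose d : ℚ) * mfrak lam (m - d)

/-- The signless Stirling number of the first kind: the number of permutations
of `[n]` with exactly `k` cycles. -/
def stirl (n k : ℕ) : ℕ := Fintype.card {σ : Equiv.Perm (Fin n) // kappa σ = k}

/-- `|C_μ|`: the number of permutations of `Fin n` of cycle type `μ`. -/
def classCard {n : ℕ} (mu : Nat.Partition n) : ℕ :=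
  Fintype.card {σ : Equiv.Perm (Fin n) // fullCycleType σ = mu.parts}

/-- power sum symmetric polynomial `p_k = ∑ x_i^k`. -/
def powSum (n k : ℕ) : MvPolynomial (Fin n) ℤ := ∑ i : Fin n, MvPolynomial.X i ^ k

/-- Vandermonde product `∏_{i<j} (x_i - x_j)`. -/
def vdm (n : ℕ) : MvPolynomial (Fin n) ℤ :=
  ∏ p ∈ Finset.univ.filter (fun p : Fin n × Fin n => p.1 < p.2),
    (MvPolynomial.X p.1 - MvPolynomial.X p.2)

/-- The irreducible character `χ^λ` of `S_n` evaluated on the conjugacy class of cycle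
type `μ`, via the Frobenius character formula: `χ^λ(μ)` is the coefficient of the
monomial `x^{λ+δ}` in `∏_{i<j}(x_i-x_j) ⬝ ∏_k p_{μ_k}`, where `δ = (n-1, n-2, …, 0)`. -/
def chi {n : ℕ} (lam mu : Nat.Partition n) : ℤ :=
  MvPolynomial.coeff
    (Finsupp.equivFunOnFinite.symm fun i : Fin n => partFn lam i + (n - 1 - (i : ℕ)))
    (vdm n * (mu.parts.map (powSum n)).prod)

/-- The partition `[1^n]` of `n`. -/
def ones (n : ℕ) : Nat.Partition n :=
  ⟨Multiset.replicate n 1, by intro i hi; simp_all [Multiset.eq_of_mem_replicate hi], by simp⟩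

/-- The generalized (polynomial) binomial coefficient `C(x, m) = x(x-1)⋯(x-m+1)/m!`. -/
def qchoose (x : ℚ) (m : ℕ) : ℚ := (∏ s ∈ Finset.range m, (x - (s : ℚ))) / (m.factorial : ℚ)

/-!
Write `κ σ` for the number of classes of `σ.SameCycle`. Since `sign σ = (-1) ^ (n - κ σ)`,
multiplicativity of the sign makes `κ α + κ β + κ (α * β) + n` even.

The bound `κ α + κ β + κ (α * β) ≤ n + 2 · #(orbits of ⟨α, β⟩)` goes by induction on `n - κ β`.
Multiplying by a transposition `(a b)` merges the cycles of `a` and `b` if they differ and splits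
their common cycle otherwise. For `β ≠ 1` put `β' = β * (a β(a))`, which has one cycle more than
`β`. If `a, β(a)` lie in one cycle of `α * β'`, then `κ (α * β) = κ (α * β') + 1` and `⟨α, β'⟩` has
no more orbits than `⟨α, β⟩`; otherwise `κ (α * β) = κ (α * β') - 1` and it has at most one orbit
more. At `β = 1` the bound is an equality, and transitivity means a single orbit.
-/

namespace Setoid

variable {X : Type*} {s t : Setoid X} {a b : X}

def glue (s : Setoid X) (a b : X) : Setoid X where
  r x y := s x y ∨ (s x a ∧ s b y) ∨ (s x b ∧ s a y)
  iseqv := by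
    refine ⟨fun x => .inl (s.refl' x), fun h => ?_, fun h h' => ?_⟩ <;>
      simp only [← Quotient.eq (r := s)] at * <;> grind

theorem le_glue : s ≤ s.glue a b := fun _ _ => .inl

theorem glue_rel : s.glue a b a b := .inr (.inl ⟨s.refl' a, s.refl' b⟩)

theorem glue_le_iff : s.glue a b ≤ t ↔ s ≤ t ∧ t a b := by
  refine ⟨fun h => ⟨le_glue.trans h, h glue_rel⟩, ?_⟩
  rintro ⟨hst, hab⟩ x y (h | ⟨h₁, h₂⟩ | ⟨h₁, h₂⟩)
  · exact hst h
  · exact t.trans' (t.trans' (hst h₁) hab) (hst h₂)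
  · exact t.trans' (t.trans' (hst h₁) (t.symm' hab)) (hst h₂)

theorem glue_eq_self (h : s a b) : s.glue a b = s :=
  le_antisymm (glue_le_iff.2 ⟨le_rfl, h⟩) le_glue

theorem card_quotient_le_of_le [Finite X] (h : s ≤ t) :
    Nat.card (Quotient t) ≤ Nat.card (Quotient s) :=
  Nat.card_le_card_of_surjective (Quotient.map' id h) <|
    Quotient.ind fun x => ⟨Quotient.mk s x, rfl⟩

theorem card_quotient_le_card_quotient_glue_add_one [Finite X] :
    Nat.card (Quotient s) ≤ Nat.card (Quotient (s.glue a b)) + 1 := by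
  let f (q : {q : Quotient s // q ≠ ⟦b⟧}) : Quotient (s.glue a b) := Quotient.map' id le_glue q.1
  have hf : f.Injective := by
    rintro ⟨⟨x⟩, hx⟩ ⟨⟨y⟩, hy⟩ h
    obtain h | ⟨-, h⟩ | ⟨h, -⟩ := Quotient.exact h
    · exact Subtype.ext (Quotient.sound h)
    · exact absurd (Quotient.sound (s.symm' h)) hy
    · exact absurd (Quotient.sound h) hx
  calc Nat.card (Quotient s) = Nat.card {q : Quotient s // q ≠ ⟦b⟧} + 1 := by
        rw [← Nat.card_congr (Equiv.optionSubtypeNe (⟦b⟧ : Quotient s)), Finite.card_option]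
    _ ≤ _ := by gcongr; exact Nat.card_le_card_of_injective f hf

theorem glue_rel_swap_apply [DecidableEq X] (s : Setoid X) (a b x : X) :
    s.glue a b x (Equiv.swap a b x) := by
  rw [Equiv.swap_apply_def]
  split_ifs with hxa hxb
  · exact hxa ▸ glue_rel
  · exact hxb ▸ (s.glue a b).symm' glue_rel
  · exact (s.glue a b).refl' x

theorem glue_rel_mul_swap_apply [DecidableEq X] {σ : Equiv.Perm X} (h : ∀ y, s y (σ y)) (x : X) :
    s.glue a b x ((σ * Equiv.swap a b) x) :=
  (s.glue a b).trans' (glue_rel_swap_apply s a b x) (le_glue (h _))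

end Setoid

namespace Equiv.Perm

open MulAction Subgroup

variable {X : Type*}

theorem sameCycle_setoid_le_iff [Finite X] {σ : Perm X} {t : Setoid X} :
    SameCycle.setoid σ ≤ t ↔ ∀ x, t x (σ x) := by
  refine ⟨fun h x => h (sameCycle_apply_right.2 (SameCycle.refl σ x)), fun h x y hxy => ?_⟩
  obtain ⟨i, rfl⟩ := hxy.exists_nat_pow_eq
  clear hxy
  induction i with
  | zero => exact t.refl' x
  | succ i ih => rw [pow_succ', mul_apply]; exact t.trans' ih (h _)

theorem orbitRel_closure_le_iff {S : Set (Perm X)} {t : Setoid X} :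
    orbitRel (closure S) X ≤ t ↔ ∀ g ∈ S, ∀ x, t x (g x) := by
  refine ⟨fun h g hg x => t.symm' (h (mem_orbit x (⟨g, subset_closure hg⟩ : closure S))),
    fun h x y hxy => ?_⟩
  obtain ⟨⟨g, hg⟩, rfl⟩ := hxy
  refine t.symm' ?_
  induction hg using closure_induction generalizing y with
  | mem g hg => exact h g hg y
  | one => exact t.refl' y
  | mul g g' _ _ ih ih' => exact t.trans' (ih' y) (ih (g' y))
  | inv g _ ih => simpa using t.symm' (ih (g⁻¹ y))

theorem sameCycle_setoid_le_orbitRel [Finite X] {G : Subgroup (Perm X)} {g : Perm X} (hg : g ∈ G) :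
    SameCycle.setoid g ≤ orbitRel G X :=
  sameCycle_setoid_le_iff.2 fun x => (orbitRel G X).symm' (mem_orbit x (⟨g, hg⟩ : G))

theorem sameCycle_setoid_mul_swap_le [Finite X] [DecidableEq X] (σ : Perm X) (a b : X) :
    SameCycle.setoid (σ * swap a b) ≤ (SameCycle.setoid σ).glue a b :=
  sameCycle_setoid_le_iff.2 <| Setoid.glue_rel_mul_swap_apply <| sameCycle_setoid_le_iff.1 le_rfl

theorem orbitRel_closure_pair_mul_swap_le [DecidableEq X] (σ τ : Perm X) (a b : X) :
    orbitRel (closure {σ, τ * swap a b}) X ≤ (orbitRel (closure {σ, τ}) X).glue a b := by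
  have h := orbitRel_closure_le_iff.1 (le_refl (orbitRel (closure {σ, τ}) X))
  refine orbitRel_closure_le_iff.2 ?_
  rintro g (rfl | rfl) x
  · exact Setoid.le_glue (h g (by simp) x)
  · exact Setoid.glue_rel_mul_swap_apply (h τ (by simp)) x

theorem sameCycle_mul_swap_of_not_sameCycle [Finite X] [DecidableEq X] {σ : Perm X} {a b : X}
    (h : ¬σ.SameCycle a b) : (σ * swap a b).SameCycle a b := by
  -- from `a`, the permutation `σ * swap a b` runs along the `σ`-cycle of `b` until it reaches `b`
  have hwalk (k : ℕ) :
      (σ * swap a b).SameCycle a b ∨ (σ * swap a b).SameCycle a ((σ ^ (k + 1)) b) := by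
    induction k with
    | zero => exact .inr ⟨1, by simp⟩
    | succ k ih =>
      refine ih.elim .inl fun hk => ?_
      by_cases hb : (σ ^ (k + 1)) b = b
      · rw [hb] at hk
        exact .inl hk
      have ha : (σ ^ (k + 1)) b ≠ a := fun ha => h (SameCycle.symm ⟨k + 1, by exact_mod_cast ha⟩)
      refine .inr ?_
      rw [← sameCycle_apply_right, mul_apply, swap_apply_of_ne_of_ne ha hb, ← mul_apply,
        ← pow_succ'] at hk
      exact hk
  have hσ : σ ^ (orderOf σ - 1 + 1) = 1 := by
    rw [Nat.sub_add_cancel (orderOf_pos σ), pow_orderOf_eq_one]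
  simpa [hσ] using hwalk (orderOf σ - 1)

def numCycles (σ : Perm X) : ℕ := Nat.card (Quotient (SameCycle.setoid σ))

theorem numCycles_le_card [Fintype X] (σ : Perm X) : numCycles σ ≤ Fintype.card X :=
  Nat.card_eq_fintype_card (α := X) ▸ Nat.card_le_card_of_surjective _ Quotient.mk_surjective

theorem numCycles_le_numCycles_of_le [Finite X] {σ τ : Perm X}
    (h : SameCycle.setoid σ ≤ SameCycle.setoid τ) : numCycles τ ≤ numCycles σ :=
  Setoid.card_quotient_le_of_le h

theorem numCycles_le_numCycles_mul_swap_add_one [Finite X] [DecidableEq X] (σ : Perm X) (a b : X) :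
    numCycles σ ≤ numCycles (σ * swap a b) + 1 :=
  Setoid.card_quotient_le_card_quotient_glue_add_one.trans <|
    Nat.add_le_add_right (Setoid.card_quotient_le_of_le (sameCycle_setoid_mul_swap_le σ a b)) 1

section

variable [Fintype X] [DecidableEq X]

theorem numCycles_eq_card_cycleType_add (σ : Perm X) :
    numCycles σ = Multiset.card σ.cycleType + (Fintype.card X - #σ.support) := by
  let ψ (x : X) : Perm X ⊕ X := if x ∈ σ.support then .inl (σ.cycleOf x) else .inr x
  have hker : SameCycle.setoid σ = Setoid.ker ψ := by
    ext x y
    change σ.SameCycle x y ↔ ψ x = ψ y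
    by_cases hx : x ∈ σ.support <;> by_cases hy : y ∈ σ.support <;>
      simp only [ψ, hx, hy, if_true, if_false]
    · simp [sameCycle_iff_cycleOf_eq_of_mem_support hx hy]
    · simpa using fun h => hy (h.mem_support_iff.1 hx)
    · simpa using fun h => hx (h.mem_support_iff.2 hy)
    · simpa using ⟨fun h => h.eq_of_left (notMem_support.1 hx), fun h => h ▸ SameCycle.refl _ _⟩
  have himage : univ.image ψ = σ.cycleFactorsFinset.disjSum σ.supportᶜ := by
    ext (c | y)
    · simp only [mem_image, mem_univ, true_and, inl_mem_disjSum, ψ, ite_eq_iff, Sum.inl.injEq,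
        reduceCtorEq, and_false, or_false]
      refine ⟨fun ⟨x, hx, h⟩ => h ▸ cycleOf_mem_cycleFactorsFinset_iff.2 hx, fun hc => ?_⟩
      obtain ⟨x, hx⟩ := (mem_cycleFactorsFinset_iff.1 hc).1.nonempty_support
      exact ⟨x, mem_cycleFactorsFinset_support_le hc hx, (cycle_is_cycleOf hx hc).symm⟩
    · simp [ψ, ite_eq_iff]
  rw [numCycles, hker, Nat.card_congr (Setoid.quotientKerEquivRange ψ),
    Nat.card_eq_card_toFinset, Set.toFinset_range, himage, card_disjSum, card_compl,
    cycleType_def, Multiset.card_map, card_def]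

theorem neg_one_pow_numCycles (σ : Perm X) :
    (-1 : ℤˣ) ^ numCycles σ = (-1) ^ Fintype.card X * sign σ := by
  have := σ.support.card_le_univ
  rw [numCycles_eq_card_cycleType_add, sign_of_cycleType, sum_cycleType, ← pow_add,
    Int.units_pow_eq_pow_mod_two, Int.units_pow_eq_pow_mod_two _ (_ + _)]
  congr 1
  omega

theorem numCycles_mul_swap_eq_or {σ : Perm X} {a b : X} (hab : a ≠ b) :
    numCycles (σ * swap a b) = numCycles σ + 1 ∨ numCycles (σ * swap a b) + 1 = numCycles σ := by
  -- each cycle relation lies below the other glued at `a, b`; the sign rules out equal counts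
  have hparity : numCycles (σ * swap a b) % 2 ≠ numCycles σ % 2 := fun h => by
    have h' := congrArg (fun k => (-1 : ℤˣ) ^ k) h
    simp only [← Int.units_pow_eq_pow_mod_two, neg_one_pow_numCycles, sign_mul, sign_swap hab,
      mul_neg, mul_one] at h'
    exact units_ne_neg_self _ h'.symm
  have h₁ := numCycles_le_numCycles_mul_swap_add_one σ a b
  have h₂ := numCycles_le_numCycles_mul_swap_add_one (σ * swap a b) a b
  rw [mul_swap_mul_self] at h₂
  omega

theorem numCycles_mul_swap_of_sameCycle {σ : Perm X} {a b : X} (hab : a ≠ b)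
    (h : σ.SameCycle a b) : numCycles (σ * swap a b) = numCycles σ + 1 := by
  have hle := sameCycle_setoid_mul_swap_le σ a b
  rw [Setoid.glue_eq_self h] at hle
  have := numCycles_le_numCycles_of_le hle
  have := numCycles_mul_swap_eq_or (σ := σ) hab
  omega

theorem numCycles_mul_swap_of_not_sameCycle {σ : Perm X} {a b : X} (h : ¬σ.SameCycle a b) :
    numCycles (σ * swap a b) + 1 = numCycles σ := by
  have hab : a ≠ b := fun hab => h (hab ▸ SameCycle.refl σ a)
  have hle := sameCycle_setoid_mul_swap_le (σ * swap a b) a b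
  rw [mul_swap_mul_self, Setoid.glue_eq_self (sameCycle_mul_swap_of_not_sameCycle h)] at hle
  have := numCycles_le_numCycles_of_le hle
  have := numCycles_mul_swap_eq_or (σ := σ) hab
  omega

theorem numCycles_one : numCycles (1 : Perm X) = Fintype.card X := by
  simp [numCycles_eq_card_cycleType_add]

theorem even_numCycles_add_numCycles_add_numCycles_mul_add_card (σ τ : Perm X) :
    Even (numCycles σ + numCycles τ + numCycles (σ * τ) + Fintype.card X) := by
  rw [← neg_one_pow_eq_one_iff_even (R := ℤˣ) (by decide), pow_add, pow_add, pow_add,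
    neg_one_pow_numCycles, neg_one_pow_numCycles, neg_one_pow_numCycles, sign_mul]
  generalize sign σ = s, sign τ = t, (-1 : ℤˣ) ^ Fintype.card X = u
  calc u * s * (u * t) * (u * (s * t)) * u = (u * u) * (u * u) * (s * s) * (t * t) := by ac_rfl
    _ = 1 := by simp only [Int.units_mul_self, mul_one]

theorem numCycles_add_numCycles_add_numCycles_mul_le (σ τ : Perm X) :
    numCycles σ + numCycles τ + numCycles (σ * τ) ≤
      Fintype.card X + 2 * Nat.card (Quotient (orbitRel (closure {σ, τ}) X)) := by
  by_cases hτ : τ = 1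
  · subst hτ
    have hle : orbitRel (closure {σ, 1}) X ≤ SameCycle.setoid σ := by
      refine orbitRel_closure_le_iff.2 ?_
      rintro g (rfl | rfl) x
      exacts [sameCycle_setoid_le_iff.1 le_rfl x, (SameCycle.setoid _).refl' x]
    have : numCycles σ ≤ Nat.card (Quotient (orbitRel (closure {σ, 1}) X)) :=
      Setoid.card_quotient_le_of_le hle
    rw [numCycles_one, mul_one]
    omega
  obtain ⟨a, ha⟩ : ∃ a, τ a ≠ a := not_forall.1 fun h => hτ (Equiv.ext h)
  set b := τ a
  have hτb : τ.SameCycle a b := sameCycle_apply_right.2 (SameCycle.refl τ a)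
  set τ' := τ * swap a b
  have hτ' : numCycles τ' = numCycles τ + 1 := numCycles_mul_swap_of_sameCycle (Ne.symm ha) hτb
  have hτ'b : τ' * swap a b = τ := mul_swap_mul_self a b τ
  have ih := numCycles_add_numCycles_add_numCycles_mul_le σ τ'
  have hup := orbitRel_closure_pair_mul_swap_le σ τ' a b
  rw [hτ'b] at hup
  have := Setoid.card_quotient_le_of_le hup
  have := Setoid.card_quotient_le_card_quotient_glue_add_one
    (s := orbitRel (closure {σ, τ'}) X) (a := a) (b := b)
  have hστ : σ * τ = σ * τ' * swap a b := by rw [mul_assoc, hτ'b]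
  by_cases hρ : (σ * τ').SameCycle a b
  · have hκ := numCycles_mul_swap_of_sameCycle (Ne.symm ha) hρ
    rw [Setoid.glue_eq_self (sameCycle_setoid_le_orbitRel
      (mul_mem (subset_closure (by simp)) (subset_closure (by simp))) hρ)] at hup
    have := Setoid.card_quotient_le_of_le hup
    rw [hστ]
    omega
  · have hκ := numCycles_mul_swap_of_not_sameCycle hρ
    rw [hστ]
    omega
termination_by Fintype.card X - numCycles τ
decreasing_by
  change Fintype.card X - numCycles τ' < Fintype.card X - numCycles τ
  have := numCycles_le_card τ'
  omega

end

end Equiv.Perm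

theorem kappa_eq_numCycles {n : ℕ} (σ : Perm (Fin n)) : kappa σ = σ.numCycles := by
  simp [kappa, fullCycleType, Perm.numCycles_eq_card_cycleType_add, Perm.sum_cycleType]

/-- Euler characteristic relation for transitive permutation triples. -/
theorem stmt2 (n : ℕ) (α β : Equiv.Perm (Fin n))
    (htrans : ∀ x y : Fin n,
      ∃ g ∈ Subgroup.closure ({α, β} : Set (Equiv.Perm (Fin n))), g x = y) :
    ∃ g : ℕ, (kappa α : ℤ) + (kappa β : ℤ) - n + (kappa (α * β) : ℤ) = 2 - 2 * g := by
  have horbits :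
      Nat.card (Quotient (MulAction.orbitRel (Subgroup.closure {α, β}) (Fin n))) ≤ 1 := by
    refine Finite.card_le_one_iff_subsingleton.2 ⟨Quotient.ind₂ fun x y => Quotient.sound ?_⟩
    obtain ⟨g, hg, rfl⟩ := htrans y x
    exact ⟨⟨g, hg⟩, rfl⟩
  have hle := Perm.numCycles_add_numCycles_add_numCycles_mul_le α β
  obtain ⟨k, hk⟩ := Perm.even_numCycles_add_numCycles_add_numCycles_mul_add_card α β
  simp only [Fintype.card_fin] at hle hk
  simp only [kappa_eq_numCycles]
  exact ⟨n + 1 - k, by omega⟩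
end
end

section
/- Let n ≥ 2p + 2 and λ = [1^j, 2^k, p−k+1, n−j−k−p−1] be a partition of n with 0 ≤ k ≤ p−1 and 0 ≤ j ≤ n−2p−2. Then χ^λ evaluated at the conjugacy class of cycle type [p, n−p] equals (−1)^{j+1}. -/
open Equiv Finset

noncomputable section
open scoped Classical

/-!
By the Frobenius formula, `χ^λ(p, n - p)` is the coefficient of `x^(λ + δ)` in
`Δ · p_p · p_(n-p)`, where `Δ = ∏_{i<j} (x_i - x_j)`. Expanding the power sums, it is
`∑_{i, i'} [x^(λ + δ - p e_i - (n - p) e_i')] Δ`, and the coefficient of `x^d` in `Δ` is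
`sign σ` when `d` is the staircase `δ` permuted by `σ`, and `0` otherwise (in particular when an
entry of `d` is at least `n` or two entries coincide). The first two entries of `λ + δ` are at
least `n`, so the two cycles must be placed in rows `0` and `1`; putting the `p`-cycle in row `0`
makes the exponent `2p - k - 1` appear twice. The only surviving term has the `p`-cycle in row
`1`, and the resulting exponent is `δ` permuted by a product of cycles of lengths `k + 1` and
`k + j + 2`, of sign `(-1)^(j+1)`.
-/

open MvPolynomial

section Vandermonde

variable {n : ℕ}

def staircase (σ : Perm (Fin n)) : Fin n →₀ ℕ := ∑ b, Finsupp.single (σ b) (b.rev : ℕ)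

lemma staircase_apply (σ : Perm (Fin n)) (a : Fin n) : staircase σ a = (σ⁻¹ a).rev := by
  rw [staircase, Finsupp.finsetSum_apply, Finset.sum_eq_single (σ⁻¹ a)]
  · simp
  · intro b _ hb
    rw [Finsupp.single_apply, if_neg]
    rintro rfl
    simp at hb
  · simp

lemma staircase_apply_self (σ : Perm (Fin n)) (b : Fin n) : staircase σ (σ b) = b.rev := by
  simp [staircase_apply]

lemma staircase_apply_lt (σ : Perm (Fin n)) (a : Fin n) : staircase σ a < n := by
  rw [staircase_apply]
  exact Fin.isLt _

lemma staircase_injective_apply (σ : Perm (Fin n)) : Function.Injective (staircase σ) := by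
  intro a b h
  rw [staircase_apply, staircase_apply, Fin.val_inj, Fin.rev_inj] at h
  exact σ⁻¹.injective h

lemma staircase_injective : Function.Injective (staircase (n := n)) := by
  intro σ τ h
  rw [← inv_inj]
  ext a : 1
  have h := DFunLike.congr_fun h a
  rwa [staircase_apply, staircase_apply, Fin.val_inj, Fin.rev_inj] at h

lemma vdm_eq_det : vdm n = (Matrix.projVandermonde 1 X).det := by
  rw [Matrix.det_projVandermonde, vdm, Finset.prod_filter, ← Finset.univ_product_univ,
    Finset.prod_product]
  refine Finset.prod_congr rfl fun i _ => ?_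
  rw [← Finset.prod_filter, Finset.filter_lt_eq_Ioi]
  simp

lemma vdm_eq_sum_sign :
    vdm n = ∑ σ : Perm (Fin n), Perm.sign σ • monomial (staircase σ) (1 : ℤ) := by
  rw [vdm_eq_det, Matrix.det_apply]
  refine Finset.sum_congr rfl fun σ _ => ?_
  rw [staircase, monomial_sum_index, map_one, one_mul]
  simp only [Matrix.projVandermonde_apply, Pi.one_apply, one_pow, one_mul,
    X_pow_eq_monomial]

lemma coeff_vdm (d : Fin n →₀ ℕ) :
    coeff d (vdm n) = ∑ σ : Perm (Fin n), if staircase σ = d then (Perm.sign σ : ℤ) else 0 := by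
  rw [vdm_eq_sum_sign, coeff_sum]
  refine Finset.sum_congr rfl fun σ _ => ?_
  rw [Units.smul_def, coeff_smul, coeff_monomial, smul_eq_mul, mul_ite, mul_one, mul_zero]

lemma coeff_vdm_staircase (σ : Perm (Fin n)) : coeff (staircase σ) (vdm n) = Perm.sign σ := by
  simp [coeff_vdm, staircase_injective.eq_iff]

lemma coeff_vdm_eq_zero_of_le {d : Fin n →₀ ℕ} {a : Fin n} (h : n ≤ d a) :
    coeff d (vdm n) = 0 := by
  rw [coeff_vdm]
  refine Finset.sum_eq_zero fun σ _ => if_neg ?_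
  rintro rfl
  exact (staircase_apply_lt σ a).not_ge h

lemma coeff_vdm_eq_zero_of_apply_eq {d : Fin n →₀ ℕ} {a b : Fin n} (hab : a ≠ b)
    (h : d a = d b) : coeff d (vdm n) = 0 := by
  rw [coeff_vdm]
  refine Finset.sum_eq_zero fun σ _ => if_neg ?_
  rintro rfl
  exact hab (staircase_injective_apply σ h)

end Vandermonde

lemma coeff_mul_powSum_mul_powSum {n : ℕ} (f : MvPolynomial (Fin n) ℤ) (M : Fin n →₀ ℕ)
    (a b : ℕ) :
    coeff M (f * (powSum n a * powSum n b)) = ∑ i, ∑ i',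
      if Finsupp.single i a + Finsupp.single i' b ≤ M then
        coeff (M - (Finsupp.single i a + Finsupp.single i' b)) f else 0 := by
  rw [powSum, powSum, Finset.sum_mul_sum, Finset.mul_sum, coeff_sum]
  refine Finset.sum_congr rfl fun i _ => ?_
  simp only [Finset.mul_sum, coeff_sum, X_pow_eq_monomial, monomial_mul, mul_one,
    coeff_mul_monomial']

/-- The exponent `λ + δ` of the monomial whose coefficient is `chi lam`. -/
def shiftedParts {n : ℕ} (lam : Nat.Partition n) : Fin n →₀ ℕ :=
  Finsupp.equivFunOnFinite.symm fun i => partFn lam i + (n - 1 - i)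

lemma shiftedParts_apply {n : ℕ} (lam : Nat.Partition n) (a : Fin n) :
    shiftedParts lam a = partFn lam a + (n - 1 - a) :=
  rfl

lemma chi_of_parts_eq_pair {n a b : ℕ} {lam mu : Nat.Partition n} (hmu : mu.parts = {a, b}) :
    chi lam mu = coeff (shiftedParts lam) (vdm n * (powSum n a * powSum n b)) := by
  simp [chi, hmu, shiftedParts]

lemma sortedParts_eq_of_pairwise {n : ℕ} {lam : Nat.Partition n} {L : List ℕ}
    (hL : lam.parts = L) (hs : L.Pairwise (· ≥ ·)) : sortedParts lam = L := by
  rw [sortedParts, hL, ← L.reverse_reverse, Multiset.coe_reverse, Multiset.coe_sort,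
    List.mergeSort_eq_self]
  simpa [List.pairwise_reverse] using hs

lemma partFn_of_parts_eq {n a b j k : ℕ} {lam : Nat.Partition n} (hba : b ≤ a) (hb : 2 ≤ b)
    (hlam : lam.parts = Multiset.replicate j 1 + Multiset.replicate k 2 + {b, a}) (i : ℕ) :
    partFn lam i = if i = 0 then a else if i = 1 then b else if i < k + 2 then 2
      else if i < k + j + 2 then 1 else 0 := by
  have hL : lam.parts = ((a :: b :: (List.replicate k 2 ++ List.replicate j 1) : List ℕ)) := by
    rw [hlam]
    simp only [← Multiset.cons_coe, ← Multiset.coe_add, Multiset.coe_replicate,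
      Multiset.insert_eq_cons, ← Multiset.singleton_add]
    abel
  have hs : (a :: b :: (List.replicate k 2 ++ List.replicate j 1)).Pairwise (· ≥ ·) := by
    simp only [List.pairwise_cons, List.pairwise_append, List.pairwise_replicate, List.mem_cons,
      List.mem_append, List.mem_replicate]
    refine ⟨?_, ?_, ?_, ?_, ?_⟩ <;> intros <;> omega
  rw [partFn, sortedParts_eq_of_pairwise hL hs]
  rcases i with _ | _ | i
  · simp
  · simp
  · simp only [List.getD_eq_getElem?_getD, List.getElem?_cons_succ, List.getElem?_append,
      List.length_replicate, List.getElem?_replicate, Nat.add_eq_zero_iff, one_ne_zero, and_false,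
      Nat.add_eq_right, add_lt_add_iff_right, ↓reduceIte]
    split_ifs <;> simp only [Option.getD_some, Option.getD_none] <;> omega

lemma Fin.val_cycleRange {n : ℕ} (i j : Fin n) :
    (Fin.cycleRange i j : ℕ) = if j < i then (j : ℕ) + 1 else if j = i then 0 else j := by
  split_ifs with hlt heq
  · exact Fin.coe_cycleRange_of_lt hlt
  · rw [Fin.coe_cycleRange_of_le heq.le, if_pos heq]
  · rw [Fin.cycleRange_of_gt (lt_of_le_of_ne (not_lt.mp hlt) (Ne.symm heq))]

section HookPartition

variable {n p j k : ℕ} {lam : Nat.Partition n}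

lemma coeff_vdm_shiftedParts_sub_eq_zero (hkp : k < p) (hjn : j + 2 * p + 2 ≤ n)
    (hlam : lam.parts =
      Multiset.replicate j 1 + Multiset.replicate k 2 + {p - k + 1, n - j - k - p - 1})
    {i i' : Fin n} (hii' : (i : ℕ) ≠ 1 ∨ (i' : ℕ) ≠ 0) :
    coeff (shiftedParts lam - (Finsupp.single i p + Finsupp.single i' (n - p))) (vdm n) = 0 := by
  set d := shiftedParts lam - (Finsupp.single i p + Finsupp.single i' (n - p))
  have hd (a : Fin n) : d a = partFn lam a + (n - 1 - a) -
      ((if (i : ℕ) = a then p else 0) + (if (i' : ℕ) = a then n - p else 0)) := by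
    simp only [d, Finsupp.tsub_apply, Finsupp.add_apply, Finsupp.single_apply, shiftedParts_apply,
      Fin.val_inj]
  have hpart := partFn_of_parts_eq (by omega) (by omega) hlam
  by_cases h0 : (i : ℕ) ≠ 0 ∧ (i' : ℕ) ≠ 0
  · refine coeff_vdm_eq_zero_of_le (a := ⟨0, by omega⟩) ?_
    simp only [hd, hpart, ↓reduceIte, h0.1, h0.2, add_zero, tsub_zero]
    omega
  by_cases h1 : (i : ℕ) ≠ 1 ∧ (i' : ℕ) ≠ 1
  · refine coeff_vdm_eq_zero_of_le (a := ⟨1, by omega⟩) ?_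
    simp only [hd, hpart, one_ne_zero, ↓reduceIte, h1.1, h1.2, add_zero, tsub_zero]
    omega
  obtain ⟨hi, hi'⟩ : (i : ℕ) = 0 ∧ (i' : ℕ) = 1 := by omega
  refine coeff_vdm_eq_zero_of_apply_eq (a := ⟨1, by omega⟩) (b := ⟨n - 2 * p + k, by omega⟩)
    (Fin.ne_of_val_ne (by dsimp only; omega)) ?_
  simp only [hd, hpart, one_ne_zero, ↓reduceIte, hi, zero_ne_one, hi', zero_add,
    Nat.add_eq_zero_iff]
  split_ifs <;> omega

lemma single_add_single_add_staircase (hkp : k < p) (hjn : j + 2 * p + 2 ≤ n)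
    (hlam : lam.parts =
      Multiset.replicate j 1 + Multiset.replicate k 2 + {p - k + 1, n - j - k - p - 1}) :
    Finsupp.single ⟨1, by omega⟩ p + Finsupp.single ⟨0, by omega⟩ (n - p) +
      staircase (Fin.cycleRange ⟨k + j + 1, by omega⟩ * Fin.cycleRange ⟨k, by omega⟩)
      = shiftedParts lam := by
  ext a
  obtain ⟨b, rfl⟩ :=
    (Fin.cycleRange ⟨k + j + 1, by omega⟩ * Fin.cycleRange ⟨k, by omega⟩).surjective a
  rw [Finsupp.add_apply, staircase_apply_self, shiftedParts_apply,
    partFn_of_parts_eq (by omega) (by omega) hlam, Perm.mul_apply]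
  have hc := Fin.val_cycleRange ⟨k, by omega⟩ b
  have hc' := Fin.val_cycleRange ⟨k + j + 1, by omega⟩ (Fin.cycleRange ⟨k, by omega⟩ b)
  generalize Fin.cycleRange ⟨k + j + 1, by omega⟩ (Fin.cycleRange ⟨k, by omega⟩ b) = c'
    at hc' ⊢
  generalize Fin.cycleRange ⟨k, by omega⟩ b = c at hc hc'
  simp only [Finsupp.add_apply, Finsupp.single_apply, Fin.ext_iff, Fin.val_rev, Fin.lt_def]
    at hc hc' ⊢
  split_ifs at hc hc' ⊢ <;> omega

end HookPartition

/-- character of `[1^j, 2^k, p-k+1, n-j-k-p-1]` on the class `[p, n-p]`. -/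
theorem stmt4 (n p j k : ℕ) (hp : 0 < p) (hn : 2 * p + 2 ≤ n)
    (hk : k ≤ p - 1) (hj : j ≤ n - 2 * p - 2)
    (lam mu : Nat.Partition n)
    (hlam : lam.parts =
      Multiset.replicate j 1 + Multiset.replicate k 2 + {p - k + 1, n - j - k - p - 1})
    (hmu : mu.parts = {p, n - p}) :
    chi lam mu = (-1 : ℤ) ^ (j + 1) := by
  have hkp : k < p := by omega
  have hjn : j + 2 * p + 2 ≤ n := by omega
  rw [chi_of_parts_eq_pair hmu, coeff_mul_powSum_mul_powSum,
    Finset.sum_eq_single ⟨1, by omega⟩, Finset.sum_eq_single ⟨0, by omega⟩,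
    ← single_add_single_add_staircase hkp hjn hlam, if_pos le_self_add, add_tsub_cancel_left,
    coeff_vdm_staircase, Perm.sign_mul, Fin.sign_cycleRange, Fin.sign_cycleRange]
  · push_cast [← pow_add]
    rw [show k + j + 1 + k = 2 * k + (j + 1) by ring, pow_add, pow_mul]
    simp
  · intro i' _ hi'
    rw [coeff_vdm_shiftedParts_sub_eq_zero hkp hjn hlam (Or.inr (Fin.val_ne_of_ne hi')), ite_self]
  · simp
  · intro i _ hi
    refine Finset.sum_eq_zero fun i' _ => ?_
    rw [coeff_vdm_shiftedParts_sub_eq_zero hkp hjn hlam (Or.inl (Fin.val_ne_of_ne hi)), ite_self]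
  · simp
end
end

section
/- Let n ≥ 2p+2 and μ be a partition of n with smallest part at least p+1 and ℓ(μ) parts. For the hook partition λ = [1^j, n−j]: if 0 ≤ j ≤ p−1 then χ^λ(μ) = (−1)^j, and if n−p ≤ j ≤ n−1 then χ^λ(μ) = (−1)^{j+1−ℓ(μ)}. -/
open Equiv Finset

noncomputable section
open scoped Classical

/-!
By the Frobenius formula, `χ^λ(μ)` is the coefficient of `x^(λ+δ)` in `a_δ · ∏ p_{μ_k}`. This
coefficient is alternating in the exponent vector, and multiplying by `p_m` lowers one exponent
by `m`: this is the Murnaghan–Nakayama recursion. For the hook `[1^j, n-j]` the exponents form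
the beta-set `{B} ∪ ([0, n) \ {g})` with `B = 2n-1-j` and `g = n-1-j`, and a part `m` either
moves the bead `B` to `B - m`, or moves the bead `g + m` into the gap `g` (an `m`-cycle, of sign
`(-1)^(m-1)`); every other move repeats an exponent. If `j < p`, every part exceeds `j`, so only
`B` can move, and it falls into the gap with the last part: the value is `(-1)^j`. If
`j ≥ n - p`, every part exceeds `n-1-j`, so `B` cannot move before the last part, and each
earlier part moves the gap: the value is `(-1)^(j+1+ℓ(μ))`.
-/

section

open MvPolynomial

lemma vdm_eq_det_vandermonde_rev (n : ℕ) :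
    vdm n = (Matrix.vandermonde fun i : Fin n => (X (Fin.rev i) : MvPolynomial (Fin n) ℤ)).det := by
  rw [Matrix.det_vandermonde, vdm, Finset.prod_sigma']
  refine Finset.prod_nbij' (fun p => ⟨Fin.rev p.2, Fin.rev p.1⟩)
    (fun x => (Fin.rev x.2, Fin.rev x.1)) ?_ ?_ ?_ ?_ ?_ <;> simp

lemma rename_vdm {n : ℕ} (σ : Perm (Fin n)) :
    rename σ (vdm n) = C (Perm.sign σ : ℤ) * vdm n := by
  set τ : Perm (Fin n) := Fin.revPerm.trans (σ.trans Fin.revPerm)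
  have hmap : (Matrix.vandermonde fun i : Fin n => (X (Fin.rev i) : MvPolynomial (Fin n) ℤ)).map
      (rename σ) = (Matrix.vandermonde fun i => X (Fin.rev i)).submatrix τ id := by
    ext i k
    simp [τ, Matrix.vandermonde_apply]
  have hsign : Perm.sign τ = Perm.sign σ := by
    simp only [τ, Perm.sign_trans]
    rw [mul_right_comm, Int.units_mul_self, one_mul]
  rw [vdm_eq_det_vandermonde_rev, AlgHom.map_det, AlgHom.mapMatrix_apply, hmap,
    Matrix.det_permute, hsign, ← eq_intCast C]

lemma rename_powSum {n : ℕ} (σ : Perm (Fin n)) (k : ℕ) :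
    rename σ (powSum n k) = powSum n k := by
  simp only [powSum, map_sum, map_pow, rename_X]
  exact Equiv.sum_comp σ fun i => (X i : MvPolynomial (Fin n) ℤ) ^ k

def frobeniusPoly (n : ℕ) (M : Multiset ℕ) : MvPolynomial (Fin n) ℤ :=
  vdm n * (M.map (powSum n)).prod

def frobeniusCoeff (n : ℕ) (M : Multiset ℕ) (w : Fin n → ℕ) : ℤ :=
  coeff (Finsupp.equivFunOnFinite.symm w) (frobeniusPoly n M)

lemma rename_frobeniusPoly {n : ℕ} (σ : Perm (Fin n)) (M : Multiset ℕ) :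
    rename σ (frobeniusPoly n M) = C (Perm.sign σ : ℤ) * frobeniusPoly n M := by
  have hpow : rename σ ∘ powSum n = powSum n := funext (rename_powSum σ)
  rw [frobeniusPoly, map_mul, rename_vdm, map_multiset_prod, Multiset.map_map, hpow, mul_assoc]

lemma frobeniusCoeff_comp_perm {n : ℕ} (M : Multiset ℕ) (w : Fin n → ℕ) (τ : Perm (Fin n)) :
    frobeniusCoeff n M (w ∘ τ) = Perm.sign τ * frobeniusCoeff n M w := by
  have h := coeff_rename_mapDomain τ τ.injective (frobeniusPoly n M)
    (Finsupp.equivFunOnFinite.symm (w ∘ τ))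
  have hdom : Finsupp.mapDomain τ (Finsupp.equivFunOnFinite.symm (w ∘ τ)) =
      Finsupp.equivFunOnFinite.symm w := by
    ext x
    simp [Finsupp.mapDomain_equiv_apply]
  rw [hdom, rename_frobeniusPoly, coeff_C_mul] at h
  exact h.symm

lemma frobeniusCoeff_eq_zero_of_apply_eq {n : ℕ} (M : Multiset ℕ) {w : Fin n → ℕ} {a b : Fin n}
    (hab : a ≠ b) (hw : w a = w b) : frobeniusCoeff n M w = 0 := by
  have hswap : w ∘ swap a b = w := by
    rw [comp_swap_eq_update, hw, Function.update_eq_self, ← hw, Function.update_eq_self]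
  have h := frobeniusCoeff_comp_perm M w (swap a b)
  rw [hswap, Perm.sign_swap hab] at h
  simp only [Units.val_neg, Units.val_one, Int.reduceNeg, neg_mul, one_mul] at h
  omega

lemma frobeniusCoeff_cons {n : ℕ} (M : Multiset ℕ) (m : ℕ) (w : Fin n → ℕ) :
    frobeniusCoeff n (m ::ₘ M) w =
      ∑ i, if m ≤ w i then frobeniusCoeff n M (Function.update w i (w i - m)) else 0 := by
  have hpoly : frobeniusPoly n (m ::ₘ M) =
      ∑ i, frobeniusPoly n M * monomial (Finsupp.single i m) 1 := by
    simp only [frobeniusPoly, Multiset.map_cons, Multiset.prod_cons, powSum, X_pow_eq_monomial,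
      ← Finset.mul_sum]
    ring
  rw [frobeniusCoeff, hpoly, coeff_sum]
  refine Finset.sum_congr rfl fun i _ => ?_
  rw [coeff_mul_monomial', mul_one]
  have hle : Finsupp.single i m ≤ Finsupp.equivFunOnFinite.symm w ↔ m ≤ w i := by
    simp [Finsupp.single_le_iff]
  have hsub : Finsupp.equivFunOnFinite.symm w - Finsupp.single i m =
      Finsupp.equivFunOnFinite.symm (Function.update w i (w i - m)) := by
    ext x
    by_cases hx : x = i <;> simp [hx]
  simp only [hle, hsub, frobeniusCoeff]

lemma frobeniusCoeff_update_sub_eq_zero {n : ℕ} (M : Multiset ℕ) {w : Fin n → ℕ} {i k : Fin n}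
    {m : ℕ} (hm : 0 < m) (hmi : m ≤ w i) (hk : w k = w i - m) :
    frobeniusCoeff n M (Function.update w i (w i - m)) = 0 := by
  have hki : k ≠ i := by
    rintro rfl
    omega
  refine frobeniusCoeff_eq_zero_of_apply_eq M hki ?_
  rw [Function.update_of_ne hki, Function.update_self, hk]

lemma prod_X_pow_eq_monomial_equivFunOnFinite {σ : Type*} [Fintype σ] (x : σ → ℕ) :
    ∏ i, (X i : MvPolynomial σ ℤ) ^ x i = monomial (Finsupp.equivFunOnFinite.symm x) 1 := by
  rw [prod_X_pow]
  congr
  ext i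
  simp

lemma frobeniusCoeff_zero_rev (n : ℕ) :
    frobeniusCoeff n 0 (fun i => (Fin.rev i : ℕ)) = 1 := by
  have hterm (σ : Perm (Fin n)) :
      ∏ i, (Matrix.vandermonde fun i => (X (Fin.rev i) : MvPolynomial (Fin n) ℤ)) (σ i) i =
        monomial (Finsupp.equivFunOnFinite.symm fun x => ((σ.symm (Fin.rev x) : Fin n) : ℕ)) 1 := by
    rw [← prod_X_pow_eq_monomial_equivFunOnFinite,
      ← Equiv.prod_comp (σ.trans Fin.revPerm) fun x => X x ^ ((σ.symm (Fin.rev x) : Fin n) : ℕ)]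
    simp [Matrix.vandermonde_apply]
  rw [frobeniusCoeff, frobeniusPoly, Multiset.map_zero, Multiset.prod_zero, mul_one,
    vdm_eq_det_vandermonde_rev, Matrix.det_apply, coeff_sum, Finset.sum_eq_single 1]
  · rw [Perm.sign_one, one_smul, hterm, coeff_monomial]
    exact if_pos rfl
  · intro σ _ hσ
    rw [coeff_smul, hterm, coeff_monomial, if_neg, smul_zero]
    intro h
    refine hσ (Equiv.ext fun y => ?_)
    have hy := congrFun (Finsupp.equivFunOnFinite.symm.injective h) (Fin.rev y)
    simp only [Fin.rev_rev] at hy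
    exact (σ.symm_apply_eq.mp (Fin.ext hy)).symm
  · simp

lemma val_cycleIcc {n : ℕ} (i j k : Fin n) :
    (Fin.cycleIcc i j k : ℕ) =
      if (k : ℕ) < i ∨ (j : ℕ) < k then (k : ℕ) else if (k : ℕ) = j then (i : ℕ) else k + 1 := by
  have : NeZero n := NeZero.of_pos k.pos
  rcases lt_or_ge k i with hki | hik
  · simp [Fin.cycleIcc_of_lt hki, Fin.lt_def.mp hki]
  rcases lt_or_ge j k with hjk | hkj
  · simp [Fin.cycleIcc_of_gt hjk, Fin.lt_def.mp hjk]
  rw [Fin.le_def] at hik hkj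
  rw [Fin.cycleIcc_of_le_of_le hik hkj, if_neg (show ¬((k : ℕ) < i ∨ (j : ℕ) < k) by omega)]
  by_cases hkj' : k = j
  · simp [hkj']
  · rw [if_neg hkj', if_neg (Fin.val_ne_of_ne hkj')]
    exact Fin.val_add_one_of_lt' (by have := Fin.val_ne_of_ne hkj'; have := j.isLt; omega)

/-- `λ + δ` for a hook, as a beta-set: the bead `B` at position `0`, then the beads
`[0, n) \ {g}` in decreasing order. -/
def hookExp (n g B : ℕ) (i : Fin n) : ℕ :=
  if (i : ℕ) = 0 then B else if (i : ℕ) < n - g then n - i else n - 1 - i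

lemma exists_hookExp_eq {n g v : ℕ} (B : ℕ) (hg : g < n) (hv : v < n) (hvg : v ≠ g) :
    ∃ k : Fin n, hookExp n g B k = v := by
  refine ⟨⟨if g < v then n - v else n - 1 - v, by split_ifs <;> omega⟩, ?_⟩
  simp only [hookExp]
  split_ifs <;> omega

lemma update_hookExp_zero {n : ℕ} (hn : 0 < n) (g B B' : ℕ) :
    Function.update (hookExp n g B) ⟨0, hn⟩ B' = hookExp n g B' := by
  funext i
  by_cases hi : i = ⟨0, hn⟩
  · subst hi
    simp [hookExp]
  · have : (i : ℕ) ≠ 0 := fun h => hi (Fin.ext h)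
    simp [Function.update_of_ne hi, hookExp, this]

lemma hookExp_self_comp_cycleIcc {n g : ℕ} (hg : g < n) :
    hookExp n g g ∘ Fin.cycleIcc ⟨0, by omega⟩ ⟨n - 1 - g, by omega⟩ =
      fun i => (Fin.rev i : ℕ) := by
  funext k
  have := val_cycleIcc ⟨0, by omega⟩ ⟨n - 1 - g, by omega⟩ k
  simp only at this
  simp only [Function.comp_apply, hookExp, Fin.val_rev]
  split_ifs at this ⊢ <;> omega

lemma update_hookExp_comp_cycleIcc {n g m : ℕ} (B : ℕ) (hm : 0 < m) (hgm : g + m < n) :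
    Function.update (hookExp n g B) ⟨n - g - m, by omega⟩ g ∘
      Fin.cycleIcc ⟨n - g - m, by omega⟩ ⟨n - 1 - g, by omega⟩ = hookExp n (g + m) B := by
  funext k
  have := val_cycleIcc ⟨n - g - m, by omega⟩ ⟨n - 1 - g, by omega⟩ k
  simp only at this
  simp only [Function.comp_apply, Function.update_apply, Fin.ext_iff, hookExp]
  split_ifs at this ⊢ <;> omega

lemma frobeniusCoeff_eq_of_comp_perm_eq {n : ℕ} (M : Multiset ℕ) {w v : Fin n → ℕ}
    (τ : Perm (Fin n)) (h : w ∘ τ = v) :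
    frobeniusCoeff n M w = Perm.sign τ * frobeniusCoeff n M v := by
  rw [← h, frobeniusCoeff_comp_perm, ← mul_assoc, ← Units.val_mul, Int.units_mul_self,
    Units.val_one, one_mul]

lemma frobeniusCoeff_hookExp_self {n g : ℕ} (hg : g < n) :
    frobeniusCoeff n 0 (hookExp n g g) = (-1) ^ (n - 1 - g) := by
  rw [frobeniusCoeff_eq_of_comp_perm_eq 0 _ (hookExp_self_comp_cycleIcc hg),
    frobeniusCoeff_zero_rev, Fin.sign_cycleIcc_of_le (Fin.mk_le_mk.mpr (Nat.zero_le _))]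
  simp

lemma hookExp_of_ne_zero {n g : ℕ} (B : ℕ) {i : Fin n} (hi : (i : ℕ) ≠ 0) :
    hookExp n g B i = if (i : ℕ) < n - g then n - i else n - 1 - i := by
  simp [hookExp, hi]

lemma frobeniusCoeff_update_hookExp_eq_zero {n g m B : ℕ} (M : Multiset ℕ) (hg : g < n)
    (hm : 0 < m) {i : Fin n} (hi0 : (i : ℕ) ≠ 0) (hi : (i : ℕ) + g + m ≠ n)
    (hmi : m ≤ hookExp n g B i) :
    frobeniusCoeff n M (Function.update (hookExp n g B) i (hookExp n g B i - m)) = 0 := by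
  have hv := hookExp_of_ne_zero (g := g) B hi0
  obtain ⟨k, hk⟩ := exists_hookExp_eq (v := hookExp n g B i - m) B hg
    (by rw [hv]; split_ifs <;> omega) (by rw [hv] at hmi ⊢; split_ifs at hmi ⊢ <;> omega)
  exact frobeniusCoeff_update_sub_eq_zero M hm hmi hk

theorem frobeniusCoeff_hookExp_cons {n g B m : ℕ} (M : Multiset ℕ) (hg : g < n) (hm : 0 < m)
    (hmB : m ≤ B) :
    frobeniusCoeff n (m ::ₘ M) (hookExp n g B) =
      (if n ≤ B - m ∨ B - m = g then frobeniusCoeff n M (hookExp n g (B - m)) else 0) +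
      (if g + m < n then (-1) ^ (m - 1) * frobeniusCoeff n M (hookExp n (g + m) B) else 0) := by
  set i₀ : Fin n := ⟨0, by omega⟩
  have hw₀ : hookExp n g B i₀ = B := by simp [i₀, hookExp]
  have hterm₀ : (if m ≤ hookExp n g B i₀ then
      frobeniusCoeff n M (Function.update (hookExp n g B) i₀ (hookExp n g B i₀ - m)) else 0) =
      if n ≤ B - m ∨ B - m = g then frobeniusCoeff n M (hookExp n g (B - m)) else 0 := by
    rw [hw₀, if_pos hmB]
    split_ifs with hB
    · rw [update_hookExp_zero]
    · obtain ⟨k, hk⟩ := exists_hookExp_eq (v := B - m) B hg (by omega) (by omega)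
      exact frobeniusCoeff_update_sub_eq_zero M hm (hw₀ ▸ hmB) (hw₀ ▸ hk)
  rw [frobeniusCoeff_cons]
  by_cases hgm : g + m < n
  · set i₁ : Fin n := ⟨n - g - m, by omega⟩
    have hw₁ : hookExp n g B i₁ = g + m := by
      rw [hookExp_of_ne_zero B (show (i₁ : ℕ) ≠ 0 by simp [i₁]; omega),
        if_pos (by simp [i₁]; omega)]
      simp only [i₁]
      omega
    have hterm₁ : (if m ≤ hookExp n g B i₁ then
        frobeniusCoeff n M (Function.update (hookExp n g B) i₁ (hookExp n g B i₁ - m)) else 0) =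
        (-1) ^ (m - 1) * frobeniusCoeff n M (hookExp n (g + m) B) := by
      rw [hw₁, if_pos (Nat.le_add_left m g), Nat.add_sub_cancel,
        frobeniusCoeff_eq_of_comp_perm_eq M _ (update_hookExp_comp_cycleIcc B hm hgm),
        Fin.sign_cycleIcc_of_le (Fin.mk_le_mk.mpr (by omega))]
      simp only [Units.val_pow_eq_pow_val, Units.val_neg, Units.val_one]
      congr 2
      omega
    rw [Finset.sum_eq_add i₀ i₁ (by simp [i₀, i₁, Fin.ext_iff]; omega) ?_ (by simp) (by simp),
      hterm₀, hterm₁, if_pos hgm]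
    intro i _ hi
    split_ifs with hmi
    · refine frobeniusCoeff_update_hookExp_eq_zero M hg hm ?_ ?_ hmi <;>
        simp [i₀, i₁, Fin.ext_iff] at hi <;> omega
    · rfl
  · rw [Finset.sum_eq_single i₀ ?_ (by simp), hterm₀, if_neg hgm, add_zero]
    intro i _ hi
    have hi0 : (i : ℕ) ≠ 0 := by simpa [i₀, Fin.ext_iff] using hi
    split_ifs with hmi
    · exact frobeniusCoeff_update_hookExp_eq_zero M hg hm hi0 (by omega) hmi
    · rfl

theorem frobeniusCoeff_hookExp_of_forall_le_add {n g : ℕ} (hg : g < n) (M : Multiset ℕ) {B : ℕ}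
    (hM : ∀ m ∈ M, n ≤ g + m) (hsum : M.sum + g = B) :
    frobeniusCoeff n M (hookExp n g B) = (-1) ^ (n - 1 - g) := by
  induction M using Multiset.induction_on generalizing B with
  | empty =>
    rw [Multiset.sum_zero, zero_add] at hsum
    rw [← hsum, frobeniusCoeff_hookExp_self hg]
  | cons m M ih =>
    have hm := hM m (Multiset.mem_cons_self m M)
    rw [Multiset.sum_cons] at hsum
    have hmove : n ≤ B - m ∨ B - m = g := by
      rcases eq_or_ne M 0 with rfl | hM0
      · rw [Multiset.sum_zero] at hsum
        omega
      · obtain ⟨m', hm'⟩ := Multiset.exists_mem_of_ne_zero hM0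
        have := Multiset.le_sum_of_mem hm'
        have := hM m' (Multiset.mem_cons_of_mem hm')
        omega
    rw [frobeniusCoeff_hookExp_cons M hg (by omega) (by omega), if_pos hmove,
      if_neg (show ¬g + m < n by omega), add_zero]
    exact ih (fun x hx => hM x (Multiset.mem_cons_of_mem hx)) (by omega)

theorem frobeniusCoeff_hookExp_of_forall_lt_add {n B : ℕ} (hB : n ≤ B) (M : Multiset ℕ) {g : ℕ}
    (hM0 : M ≠ 0) (hM : ∀ m ∈ M, B < n + m) (hsum : M.sum + g = B) :
    frobeniusCoeff n M (hookExp n g B) = (-1) ^ (n - g + Multiset.card M) := by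
  induction M using Multiset.induction_on generalizing g with
  | empty => exact absurd rfl hM0
  | cons m M ih =>
    have hm := hM m (Multiset.mem_cons_self m M)
    rw [Multiset.sum_cons] at hsum
    rw [frobeniusCoeff_hookExp_cons M (by omega) (by omega) (by omega), Multiset.card_cons]
    rcases eq_or_ne M 0 with rfl | hM0
    · rw [Multiset.sum_zero] at hsum
      rw [if_pos (Or.inr (by omega)), if_neg (by omega), add_zero, show B - m = g by omega,
        frobeniusCoeff_hookExp_self (by omega), Multiset.card_zero,
        show n - g + (0 + 1) = n - 1 - g + 2 by omega]
      ring
    · obtain ⟨m', hm'⟩ := Multiset.exists_mem_of_ne_zero hM0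
      have := Multiset.le_sum_of_mem hm'
      have := hM m' (Multiset.mem_cons_of_mem hm')
      rw [if_neg (by omega), zero_add, if_pos (by omega),
        ih hM0 (fun x hx => hM x (Multiset.mem_cons_of_mem hx)) (by omega),
        show n - g + (Multiset.card M + 1) = m - 1 + (n - (g + m) + Multiset.card M) + 2 by omega]
      ring

lemma sort_replicate_one_add_singleton {x : ℕ} (hx : 1 ≤ x) (j : ℕ) :
    (Multiset.replicate j 1 + {x}).sort (· ≤ ·) = List.replicate j 1 ++ [x] := by
  induction j with
  | zero => simp
  | succ j ih =>
    rw [Multiset.replicate_succ, Multiset.cons_add, Multiset.sort_cons, ih]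
    · rfl
    · intro b hb
      simp only [Multiset.mem_add, Multiset.mem_replicate, Multiset.mem_singleton] at hb
      omega

lemma partFn_hook {n j : ℕ} (lam : Nat.Partition n) (hjn : j < n)
    (hlam : lam.parts = Multiset.replicate j 1 + {n - j}) (i : ℕ) :
    partFn lam i = if i = 0 then n - j else if i ≤ j then 1 else 0 := by
  rw [partFn, sortedParts, hlam, sort_replicate_one_add_singleton (by omega), List.reverse_append,
    List.reverse_replicate, List.reverse_singleton, List.singleton_append]
  cases i with
  | zero => simp
  | succ i =>
    rw [List.getD_cons_succ, if_neg (Nat.succ_ne_zero i)]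
    split_ifs with h
    · exact List.getD_replicate _ (by omega)
    · exact List.getD_eq_default _ _ (by simp; omega)

lemma chi_hook {n j : ℕ} (lam mu : Nat.Partition n) (hjn : j < n)
    (hlam : lam.parts = Multiset.replicate j 1 + {n - j}) :
    chi lam mu = frobeniusCoeff n mu.parts (hookExp n (n - 1 - j) (2 * n - 1 - j)) := by
  simp only [chi, frobeniusCoeff, frobeniusPoly, partFn_hook lam hjn hlam]
  congr 2
  funext i
  simp only [hookExp]
  split_ifs <;> omega

end

theorem stmt5_general (n p j : ℕ)
    (lam mu : Nat.Partition n)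
    (hmu : ∀ m ∈ mu.parts, p + 1 ≤ m)
    (hlam : lam.parts = Multiset.replicate j 1 + {n - j}) :
    (j ≤ p - 1 → chi lam mu = (-1 : ℤ) ^ j) ∧
    (n - p ≤ j → (chi lam mu : ℚ) = (-1 : ℚ) ^ ((j : ℤ) + 1 - (mu.parts.card : ℤ))) := by
  have hjn : j < n := by
    have := lam.parts_pos (by simp [hlam] : n - j ∈ lam.parts)
    omega
  have hne : mu.parts ≠ 0 := by
    intro h
    have := mu.parts_sum
    rw [h, Multiset.sum_zero] at this
    omega
  have hsum : mu.parts.sum + (n - 1 - j) = 2 * n - 1 - j := by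
    rw [mu.parts_sum]
    omega
  rw [chi_hook lam mu hjn hlam]
  refine ⟨fun hjp => ?_, fun hjp => ?_⟩
  · rw [frobeniusCoeff_hookExp_of_forall_le_add (by omega) _
      (fun m hm => by have := hmu m hm; omega) hsum, show n - 1 - (n - 1 - j) = j by omega]
  · rw [frobeniusCoeff_hookExp_of_forall_lt_add (by omega) _ hne
      (fun m hm => by have := hmu m hm; omega) hsum, show n - (n - 1 - j) = j + 1 by omega]
    set L := Multiset.card mu.parts
    have hexp : (j : ℤ) + 1 - L = ((j + 1 + L : ℕ) : ℤ) + -2 * L := by push_cast; ring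
    rw [hexp, zpow_add₀ (by norm_num), zpow_natCast, Even.neg_one_zpow ⟨-(L : ℤ), by ring⟩,
      mul_one]
    push_cast
    rfl

/-- hook character values on a class `μ` with all parts at least `p+1`. -/
theorem stmt5 (n p j : ℕ) (hp : 0 < p) (hn : 2 * p + 2 ≤ n) (hj : j ≤ n - 1)
    (lam mu : Nat.Partition n)
    (hmu : ∀ m ∈ mu.parts, p + 1 ≤ m)
    (hlam : lam.parts = Multiset.replicate j 1 + {n - j}) :
    (j ≤ p - 1 → chi lam mu = (-1 : ℤ) ^ j) ∧
    (n - p ≤ j → (chi lam mu : ℚ) = (-1 : ℚ) ^ ((j : ℤ) + 1 - (mu.parts.card : ℤ))) :=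
  stmt5_general n p j lam mu hmu hlam
end
end

section
/- Let λ = [1^j, 2^k, p−k+1, n−j−k−p−1] be a partition of n with 0 ≤ k ≤ p−1 and 0 ≤ j ≤ n−2p−2, and let r ≥ 0. Then 𝔠_{λ,r}/f^λ = (p!(n−p)!/n!) ∑_{d=0}^r (−1)^d C(r,d) C(r−d+p−k−1, p) C(r−d+n−j−k−p−2, n−p). -/
open Equiv Finset

noncomputable section
open scoped Classical

/-!
The hook lengths cancel between `𝔪_{λ,m}` and `f^λ`, so
`𝔠_{λ,r}/f^λ = (1/n!) ∑_d (-1)^d C(r,d) ∏_u (r - d + c(u))`.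
For `λ = [1^j, 2^k, p-k+1, n-j-k-p-1]` the contents, read row by row, fill exactly the two
integer intervals `[-k, p-k-1]` and `[-j-k-1, n-j-k-p-2]`, so `∏_u (x + c(u))` is a product
of two falling factorials of lengths `p` and `n - p`; at `x = m` these are
`p! C(m+p-k-1, p)` and `(n-p)! C(m+n-j-k-p-2, n-p)`.
-/

open Polynomial in
theorem descPochhammer_eval_add {R : Type*} [CommRing R] (x : R) (s t : ℕ) :
    (descPochhammer R (s + t)).eval x =
      (descPochhammer R s).eval x * (descPochhammer R t).eval (x - s) := by
  rw [← descPochhammer_mul, eval_mul, eval_comp, eval_sub, eval_X, eval_natCast]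

theorem prod_range_add_eq_descPochhammer_eval {R : Type*} [CommRing R] (x : R) (L : ℕ) :
    ∏ c ∈ range L, (x + c) = (descPochhammer R L).eval (x + L - 1) := by
  rw [descPochhammer_eval_eq_prod_range, ← prod_range_reflect]
  refine prod_congr rfl fun c hc => ?_
  rw [Nat.cast_sub (by simp at hc; omega), Nat.cast_sub (by simp at hc; omega)]
  push_cast
  ring

section YoungDiagram

variable {n : ℕ} (lam : Nat.Partition n)

theorem pairwise_sortedParts : (sortedParts lam).Pairwise (· ≥ ·) := by
  rw [sortedParts, List.pairwise_reverse]
  exact Multiset.pairwise_sort _ _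

theorem partFn_antitone : Antitone (partFn lam) := by
  intro i i' hii'
  unfold partFn
  by_cases hi' : i' < (sortedParts lam).length
  · rw [List.getD_eq_getElem _ _ hi', List.getD_eq_getElem _ _ (by omega)]
    exact (pairwise_sortedParts lam).rel_get_of_le (a := ⟨i, by omega⟩) (b := ⟨i', hi'⟩) hii'
  · rw [List.getD_eq_default _ _ (not_lt.mp hi')]
    exact Nat.zero_le _

theorem partFn_le (i : ℕ) : partFn lam i ≤ n := by
  unfold partFn
  by_cases hi : i < (sortedParts lam).length
  · rw [List.getD_eq_getElem _ _ hi]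
    refine Nat.Partition.le_of_mem_parts (p := lam) ?_
    have hparts : ∀ m ∈ sortedParts lam, m ∈ lam.parts := by simp [sortedParts]
    exact hparts _ (List.getElem_mem hi)
  · rw [List.getD_eq_default _ _ (not_lt.mp hi)]
    exact Nat.zero_le _

theorem hookLen_pos {u : ℕ × ℕ} (hu : u ∈ cells lam) : 0 < hookLen lam u := by
  obtain ⟨i, c⟩ := u
  simp only [cells, mem_filter, mem_product, mem_range] at hu
  obtain ⟨⟨hin, -⟩, hc⟩ := hu
  have hconj : i + 1 ≤ conjFn lam c := by
    have hsub : range (i + 1) ⊆ (range n).filter fun i' => c < partFn lam i' := by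
      intro i' hi'
      simp only [mem_range, mem_filter] at hi' ⊢
      exact ⟨by omega, hc.trans_le (partFn_antitone lam (by omega))⟩
    simpa [conjFn] using card_le_card hsub
  simp only [hookLen]
  omega

theorem prod_cells_add_content (x : ℚ) :
    ∏ u ∈ cells lam, (x + content u) =
      ∏ i ∈ range n, ∏ c ∈ range (partFn lam i), (x + c - i) := by
  rw [cells, prod_filter, prod_product]
  refine prod_congr rfl fun i _ => ?_
  rw [← prod_filter]
  have hrow : (range n).filter (· < partFn lam i) = range (partFn lam i) := by
    ext c
    simp only [mem_filter, mem_range]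
    have := partFn_le lam i
    omega
  rw [hrow]
  refine prod_congr rfl fun c _ => ?_
  rw [content]
  ring

theorem mfrak_div_fdim (m : ℕ) :
    mfrak lam m / fdim lam = (∏ u ∈ cells lam, ((m : ℚ) + content u)) / n.factorial := by
  have hhook : ∏ u ∈ cells lam, (hookLen lam u : ℚ) ≠ 0 :=
    prod_ne_zero_iff.mpr fun u hu => by exact_mod_cast (hookLen_pos lam hu).ne'
  rw [mfrak, fdim, prod_div_distrib]
  field_simp

theorem cfrak_div_fdim (r : ℕ) :
    cfrak lam r / fdim lam = ∑ d ∈ range (r + 1), (-1 : ℚ) ^ d * (r.choose d : ℚ) *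
      ((∏ u ∈ cells lam, (((r - d : ℕ) : ℚ) + content u)) / n.factorial) := by
  simp only [cfrak, sum_div, mul_div_assoc, mfrak_div_fdim]

end YoungDiagram

-- The four factors on the left are the contents of rows `0`, `1`, `2, …, k+1` and
-- `k+2, …, k+j+1` of `[a, q+2, 2^k, 1^j]`; the right regroups them into two intervals.
theorem descPochhammer_eval_rows_eq {R : Type*} [CommRing R] (x : R) (a q k j : ℕ) :
    (descPochhammer R a).eval (x + a - 1) * (descPochhammer R (q + 2)).eval (x + q) *
        ((descPochhammer R k).eval (x - 1) * (descPochhammer R k).eval (x - 2)) *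
        (descPochhammer R j).eval (x - k - 2) =
      (descPochhammer R (q + k + 1)).eval (x + q) *
        (descPochhammer R (a + k + j + 1)).eval (x + a - 1) := by
  rw [show q + 2 = q + 1 + 1 by omega, show q + k + 1 = q + 1 + k by omega,
    show a + k + j + 1 = a + (1 + (k + j)) by omega,
    descPochhammer_eval_add _ (q + 1) 1, descPochhammer_eval_add _ (q + 1) k,
    descPochhammer_eval_add _ a, descPochhammer_eval_add _ 1, descPochhammer_eval_add _ k j]
  push_cast
  ring_nf

section HookShape

variable {n : ℕ} {lam : Nat.Partition n} {a b j k q : ℕ}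

theorem sortedParts_eq_of_parts_eq
    (hlam : lam.parts = Multiset.replicate j 1 + Multiset.replicate k 2 + {b, a})
    (hb : 2 ≤ b) (hba : b ≤ a) :
    sortedParts lam = a :: b :: (List.replicate k 2 ++ List.replicate j 1) := by
  have hsort : lam.parts.sort (· ≤ ·) = List.replicate j 1 ++ List.replicate k 2 ++ [b, a] := by
    refine List.Perm.eq_of_pairwise' (Multiset.pairwise_sort _ _) ?_ ?_
    · simp only [List.pairwise_append, List.pairwise_replicate, List.mem_replicate,
        List.mem_append, List.pairwise_cons, List.mem_cons]
      grind
    · rw [← Multiset.coe_eq_coe, Multiset.sort_eq, hlam]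
      rfl
  simp [sortedParts, hsort]

theorem prod_cells_add_content_eq_of_sortedParts_eq
    (hsort : sortedParts lam = a :: b :: (List.replicate k 2 ++ List.replicate j 1))
    (hn : 2 + k + j ≤ n) (x : ℚ) :
    ∏ u ∈ cells lam, (x + content u) =
      (descPochhammer ℚ a).eval (x + a - 1) * (descPochhammer ℚ b).eval (x + b - 2) *
        ((descPochhammer ℚ k).eval (x - 1) * (descPochhammer ℚ k).eval (x - 2)) *
        (descPochhammer ℚ j).eval (x - k - 2) := by
  have part_two_add_eq {s : ℕ} (hs : s < k) : partFn lam (2 + s) = 2 := by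
    rw [partFn, hsort, show 2 + s = s + 1 + 1 by omega, List.getD_cons_succ, List.getD_cons_succ,
      List.getD_append _ _ _ _ (by simpa), List.getD_replicate _ hs]
  have part_two_add_k_eq {s : ℕ} (hs : s < j) : partFn lam (2 + k + s) = 1 := by
    rw [partFn, hsort, show 2 + k + s = k + s + 1 + 1 by omega, List.getD_cons_succ,
      List.getD_cons_succ, List.getD_append_right _ _ _ _ (by simp),
      List.getD_replicate _ (by simpa)]
  have first_row : ∏ c ∈ range (partFn lam 0), (x + c - (0 : ℕ)) =
      (descPochhammer ℚ a).eval (x + a - 1) := by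
    simpa [partFn, hsort] using prod_range_add_eq_descPochhammer_eval x a
  have second_row : ∏ c ∈ range (partFn lam 1), (x + c - (1 : ℕ)) =
      (descPochhammer ℚ b).eval (x + b - 2) := by
    simp_rw [partFn, hsort, add_sub_right_comm x, List.getD_cons_succ, List.getD_cons_zero,
      prod_range_add_eq_descPochhammer_eval]
    ring_nf
  have rows_of_two : ∏ s ∈ range k, ∏ c ∈ range (partFn lam (2 + s)), (x + c - (2 + s : ℕ)) =
      (descPochhammer ℚ k).eval (x - 1) * (descPochhammer ℚ k).eval (x - 2) := by
    rw [descPochhammer_eval_eq_prod_range, descPochhammer_eval_eq_prod_range, ← prod_mul_distrib]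
    refine prod_congr rfl fun s hs => ?_
    rw [part_two_add_eq (mem_range.mp hs), prod_range_succ, prod_range_one]
    push_cast
    ring
  have rows_of_one : ∏ s ∈ range j, ∏ c ∈ range (partFn lam (2 + k + s)),
      (x + c - (2 + k + s : ℕ)) = (descPochhammer ℚ j).eval (x - k - 2) := by
    rw [descPochhammer_eval_eq_prod_range]
    refine prod_congr rfl fun s hs => ?_
    rw [part_two_add_k_eq (mem_range.mp hs), prod_range_one]
    push_cast
    ring
  have empty_rows : ∏ s ∈ range (n - (2 + k + j)), ∏ c ∈ range (partFn lam (2 + k + j + s)),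
      (x + c - (2 + k + j + s : ℕ)) = 1 :=
    prod_eq_one fun s _ => by simp [partFn, hsort, add_comm 2, add_assoc]
  rw [prod_cells_add_content, show range n = range (2 + k + j + (n - (2 + k + j))) by
    rw [Nat.add_sub_cancel' hn], prod_range_add, prod_range_add,
    prod_range_add, prod_range_succ, prod_range_one, first_row, second_row, rows_of_two,
    rows_of_one, empty_rows, mul_one]

theorem prod_cells_add_content_eq_of_parts_eq
    (hlam : lam.parts = Multiset.replicate j 1 + Multiset.replicate k 2 + {q + 2, a})
    (hqa : q + 2 ≤ a) (x : ℚ) :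
    ∏ u ∈ cells lam, (x + content u) =
      (descPochhammer ℚ (q + k + 1)).eval (x + q) *
        (descPochhammer ℚ (a + k + j + 1)).eval (x + a - 1) := by
  have hn : 2 + k + j ≤ n := by
    have hsum := lam.parts_sum
    rw [hlam] at hsum
    simp only [Multiset.sum_add, Multiset.sum_replicate, Multiset.insert_eq_cons,
      Multiset.sum_cons, Multiset.sum_singleton, smul_eq_mul] at hsum
    omega
  rw [prod_cells_add_content_eq_of_sortedParts_eq
    (sortedParts_eq_of_parts_eq hlam (by omega) hqa) hn, ← descPochhammer_eval_rows_eq]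
  push_cast
  ring_nf

end HookShape

/-- `𝔠_{λ,r}/f^λ` for `λ = [1^j, 2^k, p-k+1, n-j-k-p-1]`. -/
theorem stmt7 (n p j k r : ℕ) (hp : 0 < p) (hn : 2 * p + 2 ≤ n)
    (hk : k ≤ p - 1) (hj : j ≤ n - 2 * p - 2)
    (lam : Nat.Partition n)
    (hlam : lam.parts =
      Multiset.replicate j 1 + Multiset.replicate k 2 + {p - k + 1, n - j - k - p - 1}) :
    cfrak lam r / fdim lam =
      ((p.factorial : ℚ) * ((n - p).factorial : ℚ) / (n.factorial : ℚ)) *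
        ∑ d ∈ Finset.range (r + 1),
          (-1 : ℚ) ^ d * (r.choose d : ℚ) * ((r - d + p - k - 1).choose p : ℚ) *
            ((r - d + n - j - k - p - 2).choose (n - p) : ℚ) := by
  rw [show p - k + 1 = p - k - 1 + 2 by omega] at hlam
  have hcells := prod_cells_add_content_eq_of_parts_eq hlam (by omega)
  rw [show p - k - 1 + k + 1 = p by omega,
    show n - j - k - p - 1 + k + j + 1 = n - p by omega] at hcells
  rw [cfrak_div_fdim, mul_sum]
  refine sum_congr rfl fun d _ => ?_
  have hcast₁ : ((r - d + p - k - 1 : ℕ) : ℚ) = ((r - d : ℕ) : ℚ) + (p - k - 1 : ℕ) := by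
    rw [show r - d + p - k - 1 = r - d + (p - k - 1) by omega, Nat.cast_add]
  have hcast₂ : ((r - d + n - j - k - p - 2 : ℕ) : ℚ) =
      ((r - d : ℕ) : ℚ) + (n - j - k - p - 1 : ℕ) - 1 := by
    rw [show r - d + n - j - k - p - 2 = r - d + (n - j - k - p - 1) - 1 by omega,
      Nat.cast_sub (by omega), Nat.cast_add, Nat.cast_one]
  rw [hcells, Nat.cast_choose_eq_descPochhammer_div (K := ℚ) (r - d + p - k - 1),
    Nat.cast_choose_eq_descPochhammer_div (K := ℚ) (r - d + n - j - k - p - 2), hcast₁, hcast₂]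
  field_simp
end
end
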